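/- arXiv:2206.04217 — 4 statements merged into one kernel-verified Lean document; each statement's English description precedes it below -/
import Mathlib

section
/- Let A and B be finite nonempty types, let F₁ : A → A and G : A × B → B, and let F : A × B → A × B be the triangular map F(x, y) = (F₁(x), G(x, y)). A nonempty subset C ⊆ A × B is an attractor of F (i.e., F(C) = C and C is minimal among nonempty subsets with this property) if and only if there exist a periodic sequence c : ℕ → A with c(t+1) = F₁(c(t)) for all t and a sequence y : ℕ → B with y(t+1) = G(c(t), y(t)) for all t such that the paired sequence t ↦ (c(t), y(t)) is periodic and C = { (c(t), y(t)) : t ∈ ℕ }. -/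
/-- A nonempty subset `C` with `F '' C = C` that is minimal (w.r.t. inclusion) among
nonempty subsets with this property. -/
def IsAttractor {S : Type*} (F : S → S) (C : Set S) : Prop :=
  C.Nonempty ∧ F '' C = C ∧
    ∀ D : Set S, D.Nonempty → F '' D = D → D ⊆ C → D = C

lemma attractor_iff_orbit {S : Type*} [Finite S] (F : S → S) (C : Set S) :
    IsAttractor F C ↔ ∃ z : ℕ → S, (∀ t, z (t + 1) = F (z t)) ∧
      (∃ m, 1 ≤ m ∧ ∀ t, z (t + m) = z t) ∧ C = Set.range z := by
  constructor
  · rintro ⟨⟨p, hp⟩, hFC, hmin⟩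
    set z : ℕ → S := fun t => F^[t] p with hz
    have hzstep : ∀ t, z (t + 1) = F (z t) := fun t =>
      Function.iterate_succ_apply' F t p
    have hzC : ∀ t, z t ∈ C := by
      intro t; induction t with
      | zero => exact hp
      | succ n ih =>
        rw [hzstep, ← hFC]; exact ⟨z n, ih, rfl⟩
    obtain ⟨i, j, hlt, heq⟩ : ∃ i j, i < j ∧ z i = z j := by
      obtain ⟨i, j, hne, hij⟩ := Finite.exists_ne_map_eq_of_infinite z
      rcases hne.lt_or_gt with h | h
      · exact ⟨i, j, h, hij⟩
      · exact ⟨j, i, h, hij.symm⟩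
    set m := j - i with hmdef
    have hm : 1 ≤ m := by omega
    have hiter : ∀ a b, z (a + b) = F^[b] (z a) := by
      intro a b
      show F^[a + b] p = F^[b] (F^[a] p)
      rw [← Function.iterate_add_apply]
      congr 1; omega
    have him : z (i + m) = z i := by
      have : i + m = j := by omega
      rw [this]; exact heq.symm
    set w : ℕ → S := fun t => z (i + t) with hw
    have hwstep : ∀ t, w (t + 1) = F (w t) := by
      intro t
      show z (i + (t + 1)) = F (z (i + t))
      rw [show i + (t + 1) = (i + t) + 1 by omega, hzstep]
    have hwper : ∀ t, w (t + m) = w t := by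
      intro t
      show z (i + (t + m)) = z (i + t)
      rw [show i + (t + m) = (i + m) + t by omega, hiter, him, ← hiter]
    have hwC : Set.range w ⊆ C := by rintro _ ⟨t, rfl⟩; exact hzC _
    have hDinv : F '' Set.range w = Set.range w := by
      apply Set.Subset.antisymm
      · rintro _ ⟨_, ⟨t, rfl⟩, rfl⟩
        exact ⟨t + 1, hwstep t⟩
      · rintro _ ⟨t, rfl⟩
        refine ⟨w (t + m - 1), ⟨t + m - 1, rfl⟩, ?_⟩
        rw [← hwstep, show t + m - 1 + 1 = t + m by omega, hwper]
    have hDC : Set.range w = C := hmin _ ⟨w 0, 0, rfl⟩ hDinv hwC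
    exact ⟨w, hwstep, ⟨m, hm, hwper⟩, hDC.symm⟩
  · rintro ⟨z, hstep, ⟨m, hm, hper⟩, rfl⟩
    have hmul : ∀ n t, z (t + n * m) = z t := by
      intro n
      induction n with
      | zero => simp
      | succ k ih =>
        intro t
        rw [show t + (k + 1) * m = (t + m) + k * m by ring, ih, hper]
    refine ⟨⟨z 0, 0, rfl⟩, ?_, ?_⟩
    · apply Set.Subset.antisymm
      · rintro _ ⟨_, ⟨t, rfl⟩, rfl⟩
        exact ⟨t + 1, hstep t⟩
      · rintro _ ⟨t, rfl⟩
        refine ⟨z (t + m - 1), ⟨t + m - 1, rfl⟩, ?_⟩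
        rw [← hstep, show t + m - 1 + 1 = t + m by omega, hper]
    · intro D hDne hFD hDsub
      obtain ⟨d, hd⟩ := hDne
      obtain ⟨t₀, hdt⟩ := hDsub hd
      have horbit : ∀ k, z (t₀ + k) ∈ D := by
        intro k
        induction k with
        | zero => simpa [← hdt] using hd
        | succ k ih =>
          rw [show t₀ + (k + 1) = (t₀ + k) + 1 by omega, hstep, ← hFD]
          exact ⟨_, ih, rfl⟩
      refine Set.Subset.antisymm hDsub ?_
      rintro _ ⟨s, rfl⟩
      have hle : t₀ ≤ t₀ * m := Nat.le_mul_of_pos_right _ hm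
      have h1 : z s = z (t₀ + (s + t₀ * m - t₀)) := by
        rw [show t₀ + (s + t₀ * m - t₀) = s + t₀ * m by omega, hmul]
      rw [h1]; exact horbit _

/-- A nonempty subset `C ⊆ A × B` is an attractor of the triangular map
`F (x, y) = (F₁ x, G (x, y))` iff it is the point set of a pair of sequences
`(c, y)` where `c` is a periodic trajectory of `F₁`, `y` is driven by `G` along `c`,
and the paired sequence is periodic. -/
theorem stmt2 {A B : Type*} [Fintype A] [Fintype B] [Nonempty A] [Nonempty B]
    (F₁ : A → A) (G : A × B → B) (F : A × B → A × B)
    (hF : ∀ p : A × B, F p = (F₁ p.1, G p))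
    (C : Set (A × B)) (hC : C.Nonempty) :
    IsAttractor F C ↔
      ∃ (c : ℕ → A) (y : ℕ → B),
        (∃ m, 1 ≤ m ∧ ∀ t, c (t + m) = c t) ∧
        (∀ t, c (t + 1) = F₁ (c t)) ∧
        (∀ t, y (t + 1) = G (c t, y t)) ∧
        (∃ m, 1 ≤ m ∧ ∀ t, (c (t + m), y (t + m)) = (c t, y t)) ∧
        C = {p | ∃ t, p = (c t, y t)} := by
  rw [attractor_iff_orbit]
  constructor
  · rintro ⟨z, hstep, ⟨m, hm, hper⟩, rfl⟩
    refine ⟨fun t => (z t).1, fun t => (z t).2,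
      ⟨m, hm, fun t => congrArg Prod.fst (hper t)⟩,
      ?_, ?_, ⟨m, hm, fun t => by exact hper t⟩, ?_⟩
    · intro t; exact congrArg Prod.fst ((hstep t).trans (hF (z t)))
    · intro t; exact congrArg Prod.snd ((hstep t).trans (hF (z t)))
    · ext p
      simp only [Set.mem_range, Set.mem_setOf_eq]
      constructor
      · rintro ⟨t, rfl⟩; exact ⟨t, rfl⟩
      · rintro ⟨t, rfl⟩; exact ⟨t, rfl⟩
  · rintro ⟨c, y, _, hcstep, hystep, ⟨m, hm, hper⟩, rfl⟩
    refine ⟨fun t => (c t, y t), ?_, ⟨m, hm, hper⟩, ?_⟩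
    · intro t
      show (c (t + 1), y (t + 1)) = F (c t, y t)
      rw [hcstep, hystep, hF]
    · ext p
      simp only [Set.mem_range, Set.mem_setOf_eq]
      constructor
      · rintro ⟨t, rfl⟩; exact ⟨t, rfl⟩
      · rintro ⟨t, rfl⟩; exact ⟨t, rfl⟩
end

section
/- Let A and B be finite nonempty types, let F₁ : A → A and G : A × B → B, and let F : A × B → A × B be the triangular map F(x, y) = (F₁(x), G(x, y)). If C ⊆ A × B is an attractor of F, then the projection C₁ = { x : ∃ y, (x, y) ∈ C } of C onto the first factor is an attractor of F₁. -/
lemma exists_invariant_subset {S : Type*} [Finite S] (F : S → S) :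
    ∀ n (X : Set S), X.ncard ≤ n → X.Nonempty → F '' X ⊆ X →
      ∃ E : Set S, E.Nonempty ∧ F '' E = E ∧ E ⊆ X := by
  intro n
  induction n with
  | zero =>
    intro X hle hne _
    have := Set.ncard_pos (Set.toFinite X) |>.mpr hne
    omega
  | succ n ih =>
    intro X hle hne hsub
    by_cases h : F '' X = X
    · exact ⟨X, hne, h, subset_refl X⟩
    · have hss : F '' X ⊂ X := ⟨hsub, fun h' => h (subset_antisymm hsub h')⟩
      have hlt : (F '' X).ncard < X.ncard := Set.ncard_lt_ncard hss (Set.toFinite X)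
      obtain ⟨E, h1, h2, h3⟩ := ih (F '' X) (by omega) (hne.image F) (Set.image_mono hsub)
      exact ⟨E, h1, h2, h3.trans hsub⟩

/-- The projection onto the first factor of an attractor of a triangular map
`F (x, y) = (F₁ x, G (x, y))` is an attractor of `F₁`. -/
theorem stmt3 {A B : Type*} [Fintype A] [Fintype B] [Nonempty A] [Nonempty B]
    (F₁ : A → A) (G : A × B → B) (F : A × B → A × B)
    (hF : ∀ p : A × B, F p = (F₁ p.1, G p))
    (C : Set (A × B)) (hC : IsAttractor F C) :
    IsAttractor F₁ {x : A | ∃ y : B, (x, y) ∈ C} := by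
  obtain ⟨hCne, hCim, hCmin⟩ := hC
  set C₁ : Set A := {x : A | ∃ y : B, (x, y) ∈ C} with hC₁
  have hproj : ∀ p : A × B, p ∈ C → p.1 ∈ C₁ := fun p hp => ⟨p.2, hp⟩
  refine ⟨?_, ?_, ?_⟩
  · obtain ⟨p, hp⟩ := hCne
    exact ⟨p.1, hproj p hp⟩
  · apply subset_antisymm
    · rintro _ ⟨x, ⟨y, hxy⟩, rfl⟩
      have : F (x, y) ∈ C := hCim ▸ Set.mem_image_of_mem F hxy
      rw [hF] at this
      exact ⟨G (x, y), this⟩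
    · rintro x ⟨y, hxy⟩
      rw [← hCim] at hxy
      obtain ⟨p, hp, hfp⟩ := hxy
      rw [hF] at hfp
      have : F₁ p.1 = x := congrArg Prod.fst hfp
      exact ⟨p.1, hproj p hp, this⟩
  · intro D hDne hDim hDsub
    set X : Set (A × B) := {p ∈ C | p.1 ∈ D} with hX
    have hXne : X.Nonempty := by
      obtain ⟨x, hx⟩ := hDne
      obtain ⟨y, hxy⟩ := hDsub hx
      exact ⟨(x, y), hxy, hx⟩
    have hXsub : F '' X ⊆ X := by
      rintro _ ⟨p, ⟨hpC, hpD⟩, rfl⟩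
      constructor
      · exact hCim ▸ Set.mem_image_of_mem F hpC
      · rw [hF]
        exact hDim ▸ Set.mem_image_of_mem F₁ hpD
    obtain ⟨E, hEne, hEim, hEX⟩ :=
      exists_invariant_subset F X.ncard X le_rfl hXne hXsub
    have hEC : E = C := hCmin E hEne hEim (hEX.trans (Set.sep_subset _ _))
    apply subset_antisymm hDsub
    rintro x ⟨y, hxy⟩
    have : (x, y) ∈ X := hEX (hEC ▸ hxy)
    exact this.2
end

section
/- Let A and B be finite nonempty types, let F₁ : A → A and G : A × B → B, and let F : A × B → A × B be the triangular map F(x, y) = (F₁(x), G(x, y)). Suppose c ∈ A satisfies F₁(c) = c and {c} is the unique attractor of F₁, and suppose C₂ ⊆ B is the unique attractor of the map H : B → B, H(y) = G(c, y). Then {c} × C₂ is the unique attractor of F. -/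
open Set Function

section

variable {S T : Type*}

theorem isAttractor_iff_minimal (f : S → S) (C : Set S) :
    IsAttractor f C ↔ Minimal (fun D : Set S => D.Nonempty ∧ f '' D = D) C :=
  ⟨fun ⟨hne, hinv, hmin⟩ => ⟨⟨hne, hinv⟩, fun D hD hDC => (hmin D hD.1 hD.2 hDC).ge⟩,
    fun hC => ⟨hC.1.1, hC.1.2, fun _ hne hinv hDC => hC.eq_of_le ⟨hne, hinv⟩ hDC⟩⟩

theorem exists_isAttractor_subset [Finite S] {f : S → S} {E : Set S} (hne : E.Nonempty)
    (hinv : f '' E = E) : ∃ C ⊆ E, IsAttractor f C := by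
  simp only [isAttractor_iff_minimal]
  exact (toFinite _).exists_le_minimal (show E ∈ {D : Set S | D.Nonempty ∧ f '' D = D} from
    ⟨hne, hinv⟩)

theorem image_diff_singleton_eq_self [Finite S] {f : S → S} {c : S} (hfix : f c = c)
    {E : Set S} (hinv : f '' E = E) : f '' (E \ {c}) = E \ {c} := by
  have hmaps : MapsTo f E E := fun x hx => hinv.subset (mem_image_of_mem f hx)
  have hinj : InjOn f E :=
    ((toFinite E).surjOn_iff_bijOn_of_mapsTo hmaps |>.mp hinv.symm.subset).injOn
  ext y
  constructor
  · rintro ⟨x, ⟨hxE, hxc⟩, rfl⟩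
    refine ⟨hmaps hxE, fun hfx => hxc (hinj hxE ?_ (hfx.trans hfix.symm))⟩
    exact (hfx : f x = c) ▸ hmaps hxE
  · rintro ⟨hyE, hyc⟩
    obtain ⟨x, hxE, rfl⟩ := hinv.symm ▸ hyE
    exact ⟨x, ⟨hxE, fun hxc => hyc ((hxc : x = c) ▸ hfix)⟩, rfl⟩

theorem subset_singleton_of_image_eq_self [Finite S] {f : S → S} {c : S} (hfix : f c = c)
    (huniq : ∀ D : Set S, IsAttractor f D → D = {c}) {E : Set S} (hinv : f '' E = E) :
    E ⊆ {c} := by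
  by_contra hE
  obtain ⟨C, hCE, hC⟩ := exists_isAttractor_subset (sdiff_nonempty.mpr hE)
    (image_diff_singleton_eq_self hfix hinv)
  exact (hCE (huniq C hC ▸ mem_singleton c)).2 rfl

namespace Function.Semiconj

variable {φ : T → S} {H : T → T} {F : S → S}

theorem image_preimage_eq_self (h : Semiconj φ H F) (hφ : Injective φ) {D : Set S}
    (hD : D ⊆ range φ) (hinv : F '' D = D) : H '' (φ ⁻¹' D) = φ ⁻¹' D := by
  apply image_injective.mpr hφ
  rw [h.set_image, image_preimage_eq_of_subset hD, hinv]

theorem isAttractor_image (h : Semiconj φ H F) (hφ : Injective φ) {C : Set T}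
    (hC : IsAttractor H C) : IsAttractor F (φ '' C) := by
  obtain ⟨hne, hinv, hmin⟩ := hC
  refine ⟨hne.image φ, by rw [← h.set_image, hinv], fun D hDne hDinv hDC => ?_⟩
  have hDrange : D ⊆ range φ := hDC.trans (image_subset_range φ C)
  have hpre : φ ⁻¹' D = C :=
    hmin _ (hDne.preimage' hDrange) (h.image_preimage_eq_self hφ hDrange hDinv)
      ((preimage_mono hDC).trans (preimage_image_eq C hφ).subset)
  rw [← hpre, image_preimage_eq_of_subset hDrange]

end Function.Semiconj

end

theorem stmt5_general {A B : Type*} [Fintype A] [Fintype B]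
    (F₁ : A → A) (G : A × B → B) (F : A × B → A × B)
    (hF : ∀ p : A × B, F p = (F₁ p.1, G p))
    (c : A) (hfix : F₁ c = c)
    (hcu : ∀ D : Set A, IsAttractor F₁ D → D = {c})
    (C₂ : Set B)
    (h₂ : IsAttractor (fun y => G (c, y)) C₂)
    (h₂u : ∀ D : Set B, IsAttractor (fun y => G (c, y)) D → D = C₂) :
    IsAttractor F ({c} ×ˢ C₂) ∧
      ∀ D : Set (A × B), IsAttractor F D → D = {c} ×ˢ C₂ := by
  have hfst : Semiconj Prod.fst F F₁ := fun p => by rw [hF]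
  have hmk : Semiconj (Prod.mk c) (fun y => G (c, y)) F := fun y => by rw [hF, hfix]
  have hφ : Injective (Prod.mk c : B → A × B) := Prod.mk_right_injective c
  have hattr := hmk.isAttractor_image hφ h₂
  rw [singleton_prod]
  refine ⟨hattr, fun D ⟨hDne, hDinv, hDmin⟩ => ?_⟩
  have hDfst : Prod.fst '' D ⊆ {c} :=
    subset_singleton_of_image_eq_self hfix hcu (by rw [← hfst.set_image, hDinv])
  have hDrange : D ⊆ range (Prod.mk c) := fun p hp =>
    ⟨p.2, Prod.ext (hDfst (mem_image_of_mem _ hp)).symm rfl⟩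
  obtain ⟨C, hCD, hC⟩ := exists_isAttractor_subset (hDne.preimage' hDrange)
    (hmk.image_preimage_eq_self hφ hDrange hDinv)
  rw [h₂u C hC] at hCD
  exact (hDmin _ hattr.1 hattr.2.1 (image_subset_iff.mpr hCD)).symm

/-- If `c` is a steady state of `F₁` with `{c}` the unique attractor of `F₁`, and
`C₂` is the unique attractor of `y ↦ G (c, y)`, then `{c} ×ˢ C₂` is the unique
attractor of the triangular map `F (x, y) = (F₁ x, G (x, y))`. -/
theorem stmt5 {A B : Type*} [Fintype A] [Fintype B] [Nonempty A] [Nonempty B]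
    (F₁ : A → A) (G : A × B → B) (F : A × B → A × B)
    (hF : ∀ p : A × B, F p = (F₁ p.1, G p))
    (c : A) (hfix : F₁ c = c)
    (hc : IsAttractor F₁ {c})
    (hcu : ∀ D : Set A, IsAttractor F₁ D → D = {c})
    (C₂ : Set B)
    (h₂ : IsAttractor (fun y => G (c, y)) C₂)
    (h₂u : ∀ D : Set B, IsAttractor (fun y => G (c, y)) D → D = C₂) :
    IsAttractor F ({c} ×ˢ C₂) ∧
      ∀ D : Set (A × B), IsAttractor F D → D = {c} ×ˢ C₂ :=
  stmt5_general F₁ G F hF c hfix hcu C₂ h₂ h₂u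
end

section
/- Let A and B be finite nonempty types, let F₁ : A → A and G : A × B → B, and let F : A × B → A × B be the triangular map F(x, y) = (F₁(x), G(x, y)). Suppose C₁ ⊆ A is the unique attractor of F₁, realized by a periodic sequence c : ℕ → A with c(t+1) = F₁(c(t)) for all t and C₁ = { c(t) : t ∈ ℕ }. Suppose d ∈ B satisfies G(x, d) = d for all x ∈ C₁, and suppose that for every y₀ ∈ B and every phase shift s ∈ ℕ, the sequence defined by y(0) = y₀ and y(t+1) = G(c(t+s), y(t)) is eventually constant equal to d (there is T with y(t) = d for all t ≥ T). Then C₁ × {d} is the unique attractor of F. -/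
private lemma iter_mem {S : Type*} {F : S → S} {D : Set S} (hD : F '' D ⊆ D) :
    ∀ n, ∀ p ∈ D, F^[n] p ∈ D := by
  intro n
  induction n with
  | zero => simp
  | succ n ih =>
    intro p hp
    rw [Function.iterate_succ_apply]
    exact ih _ (hD ⟨p, hp, rfl⟩)

private lemma cycle_attractor {S : Type*} {f : S → S} {x : S} {m : ℕ} (hm : 1 ≤ m)
    (hx : f^[m] x = x) : IsAttractor f {y | ∃ n, f^[n] x = y} := by
  have hper : ∀ a t, f^[a + m * t] x = f^[a] x := by
    intro a t
    induction t with
    | zero => simp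
    | succ t ih =>
      have h1 : a + m * (t + 1) = (a + m * t) + m := by ring
      rw [h1, Function.iterate_add_apply, hx, ih]
  refine ⟨⟨x, 0, rfl⟩, ?_, ?_⟩
  · ext y
    constructor
    · rintro ⟨_, ⟨n, rfl⟩, rfl⟩
      exact ⟨n + 1, Function.iterate_succ_apply' f n x⟩
    · rintro ⟨n, rfl⟩
      obtain ⟨m', rfl⟩ : ∃ m', m = m' + 1 := ⟨m - 1, by omega⟩
      have h2 : f^[n] x = f (f^[n + m'] x) := by
        have h4 := hper n 1
        rw [mul_one] at h4
        rw [← h4]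
        have h3 : n + (m' + 1) = (n + m') + 1 := by ring
        rw [h3, Function.iterate_succ_apply']
      exact ⟨f^[n + m'] x, ⟨n + m', rfl⟩, h2.symm⟩
  · intro D hDne hDinv hDE
    apply Set.Subset.antisymm hDE
    obtain ⟨q, hq⟩ := hDne
    obtain ⟨k, hk⟩ := hDE hq
    rintro y ⟨n, rfl⟩
    have hkle : k + 1 ≤ m * (k + 1) := Nat.le_mul_of_pos_left _ hm
    set j := n + m * (k + 1) - k with hj
    have hjk : j + k = n + m * (k + 1) := by omega
    have hmem : f^[j] q ∈ D := iter_mem hDinv.le j q hq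
    have heq : f^[j] q = f^[n] x := by
      rw [← hk, ← Function.iterate_add_apply, hjk, hper]
    rwa [heq] at hmem

private lemma exists_periodic {S : Type*} [Finite S] {F : S → S} {D : Set S}
    (hne : D.Nonempty) (hinv : F '' D = D) :
    ∃ q ∈ D, ∃ m, 1 ≤ m ∧ F^[m] q = q := by
  obtain ⟨q₀, hq₀⟩ := hne
  obtain ⟨i, j, hne', heq⟩ :=
    Finite.exists_ne_map_eq_of_infinite (fun n : ℕ => F^[n] q₀)
  wlog hij : i < j generalizing i j
  · exact this j i (Ne.symm hne') heq.symm (by omega)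
  refine ⟨F^[i] q₀, iter_mem hinv.le i q₀ hq₀, j - i, by omega, ?_⟩
  rw [← Function.iterate_add_apply]
  have h5 : j - i + i = j := by omega
  rw [h5]
  exact heq.symm

private lemma attractor_periodic {S : Type*} [Finite S] {F : S → S} {D : Set S}
    (h : IsAttractor F D) : ∀ p ∈ D, ∃ m, 1 ≤ m ∧ F^[m] p = p := by
  obtain ⟨hne, hinv, hmin⟩ := h
  obtain ⟨q, hqD, m, hm, hq⟩ := exists_periodic hne hinv
  have hcyc := cycle_attractor hm hq
  have hED : {y | ∃ n, F^[n] q = y} ⊆ D := by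
    rintro y ⟨n, rfl⟩; exact iter_mem hinv.le n q hqD
  have hE : {y | ∃ n, F^[n] q = y} = D := hmin _ hcyc.1 hcyc.2.1 hED
  intro p hp
  rw [← hE] at hp
  obtain ⟨k, rfl⟩ := hp
  refine ⟨m, hm, ?_⟩
  rw [← Function.iterate_add_apply, add_comm, Function.iterate_add_apply, hq]

/-- Suppose `C₁` is the unique attractor of `F₁`, realized by a periodic trajectory `c`
of `F₁`, `d` is fixed by `G (x, ·)` for all `x ∈ C₁`, and every sequence driven by `G`
along any phase shift of `c` is eventually constant equal to `d`. Then `C₁ ×ˢ {d}` is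
the unique attractor of the triangular map `F (x, y) = (F₁ x, G (x, y))`. -/
theorem stmt6 {A B : Type*} [Fintype A] [Fintype B] [Nonempty A] [Nonempty B]
    (F₁ : A → A) (G : A × B → B) (F : A × B → A × B)
    (hF : ∀ p : A × B, F p = (F₁ p.1, G p))
    (C₁ : Set A) (c : ℕ → A)
    (h₁ : IsAttractor F₁ C₁)
    (h₁u : ∀ D : Set A, IsAttractor F₁ D → D = C₁)
    (hcper : ∃ m, 1 ≤ m ∧ ∀ t, c (t + m) = c t)
    (hc : ∀ t, c (t + 1) = F₁ (c t))
    (hC₁ : C₁ = {x : A | ∃ t, c t = x})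
    (d : B) (hd : ∀ x ∈ C₁, G (x, d) = d)
    (hconv : ∀ (y : ℕ → B) (s : ℕ), (∀ t, y (t + 1) = G (c (t + s), y t)) →
      ∃ T, ∀ t, T ≤ t → y t = d) :
    IsAttractor F (C₁ ×ˢ ({d} : Set B)) ∧
      ∀ D : Set (A × B), IsAttractor F D → D = C₁ ×ˢ ({d} : Set B) := by
  obtain ⟨hC₁ne, hC₁inv, hC₁min⟩ := h₁
  -- first coordinate of iterates
  have hfst : ∀ (n : ℕ) (p : A × B), (F^[n] p).1 = F₁^[n] p.1 := by
    intro n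
    induction n with
    | zero => intro p; simp
    | succ n ih =>
      intro p
      rw [Function.iterate_succ_apply', Function.iterate_succ_apply', hF, ← ih]
  -- shift formula for c
  have hcs : ∀ s t, c (t + s) = F₁^[t] (c s) := by
    intro s t
    induction t with
    | zero => simp
    | succ t ih =>
      have h6 : t + 1 + s = (t + s) + 1 := by omega
      rw [h6, hc, ih]
      exact (Function.iterate_succ_apply' F₁ t (c s)).symm
  -- the candidate is an attractor
  have hattr : IsAttractor F (C₁ ×ˢ ({d} : Set B)) := by
    refine ⟨?_, ?_, ?_⟩
    · obtain ⟨x, hx⟩ := hC₁ne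
      exact ⟨(x, d), hx, rfl⟩
    · ext p
      constructor
      · rintro ⟨⟨x, y⟩, ⟨hx, hy⟩, rfl⟩
        simp only [Set.mem_singleton_iff] at hy
        subst hy
        rw [hF]
        refine ⟨?_, ?_⟩
        · rw [← hC₁inv]; exact ⟨x, hx, rfl⟩
        · simpa using hd x hx
      · rintro ⟨hp1, hp2⟩
        simp only [Set.mem_singleton_iff] at hp2
        rw [← hC₁inv] at hp1
        obtain ⟨x, hx, hxp⟩ := hp1
        refine ⟨(x, d), ⟨hx, rfl⟩, ?_⟩
        rw [hF]
        simp only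
        rw [hd x hx, hxp]
        exact Prod.ext rfl hp2.symm
    · intro D hDne hDinv hDC
      apply Set.Subset.antisymm hDC
      -- first coordinates of D form an invariant set equal to C₁
      have hD1inv : F₁ '' (Prod.fst '' D) = Prod.fst '' D := by
        rw [← Set.image_comp]
        nth_rewrite 2 [← hDinv]
        rw [← Set.image_comp]
        ext p
        simp [hF]
      have hD1sub : Prod.fst '' D ⊆ C₁ := by
        rintro _ ⟨p, hp, rfl⟩
        exact (hDC hp).1
      have hD1 : Prod.fst '' D = C₁ :=
        hC₁min _ (hDne.image _) hD1inv hD1sub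
      rintro ⟨x, y⟩ ⟨hx, hy⟩
      simp only [Set.mem_singleton_iff] at hy
      rw [← hD1] at hx
      obtain ⟨p, hp, hp1⟩ := hx
      have hp2 : p.2 = d := (hDC hp).2
      have hpe : p = (x, y) := Prod.ext hp1 (by rw [hp2, hy])
      rwa [hpe] at hp
  refine ⟨hattr, ?_⟩
  -- uniqueness
  intro D hD
  apply hattr.2.2 D hD.1 hD.2.1
  -- show D ⊆ C₁ ×ˢ {d}
  intro p hp
  obtain ⟨m, hm, hpm⟩ := attractor_periodic hD p hp
  -- first coordinate is periodic, so its orbit is an attractor of F₁, hence = C₁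
  have hx : F₁^[m] p.1 = p.1 := by
    rw [← hfst, hpm]
  have hEC : {y | ∃ n, F₁^[n] p.1 = y} = C₁ := h₁u _ (cycle_attractor hm hx)
  have hp1C : p.1 ∈ C₁ := by rw [← hEC]; exact ⟨0, rfl⟩
  -- get phase s
  have hp1c : ∃ s, c s = p.1 := by rw [hC₁] at hp1C; exact hp1C
  obtain ⟨s, hs⟩ := hp1c
  -- the second-coordinate sequence
  set y : ℕ → B := fun t => (F^[t] p).2 with hy
  have hcoord : ∀ t, (F^[t] p).1 = c (t + s) := by
    intro t
    rw [hfst, hcs, hs]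
  have hyrec : ∀ t, y (t + 1) = G (c (t + s), y t) := by
    intro t
    simp only [hy]
    rw [Function.iterate_succ_apply', hF]
    rw [← hcoord t]
  obtain ⟨T, hT⟩ := hconv y s hyrec
  -- evaluate at a large multiple of m
  have hmult : ∀ k, F^[m * k] p = p := by
    intro k
    induction k with
    | zero => simp
    | succ k ih =>
      have h7 : m * (k + 1) = m + m * k := by ring
      rw [h7, Function.iterate_add_apply, ih, hpm]
  have hTle : T ≤ m * T + m := by nlinarith
  have hyd : y (m * T + m) = d := hT _ hTle
  have hyp : y (m * T + m) = p.2 := by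
    simp only [hy]
    have h8 : m * T + m = m * (T + 1) := by ring
    rw [h8, hmult]
  refine ⟨hp1C, ?_⟩
  simp only [Set.mem_singleton_iff]
  rw [← hyp, hyd]
end
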